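/- Let p, q be complex numbers with Re(p) > 0, Re(q) > 0 and let a, b be real numbers with a, b > 1. For u ≥ 0 let m(u) denote the number of positive integers n with n + b ≤ e^u, i.e. m(u) = max(⌊e^u − b⌋, 0). Then for every complex z with |z| < 1, Φ_{p,q}(a,b;z) = (1+a)^p (1+b)^q · (z q/Γ(p)) ∫_0^∞ ∫_0^∞ e^{−q u} e^{−(a+1) v} v^{p−1} (1 − (z e^{−v})^{m(u)}) / (1 − z e^{−v}) du dv. -/

import Mathlib

open MeasureTheory

/-- The generalized polylogarithm `Φ_{p,q}(a,b;z)`. -/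
noncomputable def genPolylog (p q : ℂ) (a b : ℝ) (z : ℂ) : ℂ :=
  ∑' k : ℕ, (((1 + a : ℝ) : ℂ) ^ p * ((1 + b : ℝ) : ℂ) ^ q /
      ((((k : ℝ) + 1 + a : ℝ) : ℂ) ^ p * (((k : ℝ) + 1 + b : ℝ) : ℂ) ^ q)) * z ^ (k + 1)

/-- `mCount b u` is the number of positive integers `n` with `n + b ≤ e^u`. -/
noncomputable def mCount (b : ℝ) (u : ℝ) : ℕ :=
  Set.ncard {n : ℕ | 0 < n ∧ (n : ℝ) + b ≤ Real.exp u}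

/-!
Write `W = z e^{-v}`. The quotient `(1 - W^{m(u)}) / (1 - W)` is the geometric sum
`∑_{k < m(u)} W^k`, and `k < m(u)` exactly when `u ≥ log (k + 1 + b)`; integrating `e^{-qu}` over
that half-line gives `W^k (k + 1 + b)^{-q} / q`. So the `v`-integrand is `v^{p-1} ∑_k c_k e^{-(k+1+a)v}`
with `c_k = z^k (k + 1 + b)^{-q} / q`, whose Mellin transform at `p` is the Dirichlet series
`Γ(p) ∑_k c_k (k + 1 + a)^{-p}` (`hasSum_mellin`), i.e. `Φ_{p,q}(a,b;z)` up to the stated factor.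
Both interchanges of sum and integral are dominated by `∑ ‖z‖^k`.
-/

open Set

lemma mCount_eq_toNat_floor (b u : ℝ) : mCount b u = (⌊Real.exp u - b⌋).toNat := by
  have hset : {n : ℕ | 0 < n ∧ (n : ℝ) + b ≤ Real.exp u} =
      Finset.Icc 1 (⌊Real.exp u - b⌋).toNat := by
    ext n
    have hfloor : (n : ℝ) + b ≤ Real.exp u ↔ (n : ℤ) ≤ ⌊Real.exp u - b⌋ := by
      rw [Int.le_floor, Int.cast_natCast, le_sub_iff_add_le]
    simp only [mem_ofPred_eq, Finset.coe_Icc, mem_Icc, hfloor]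
    omega
  rw [mCount, hset, ncard_coe_finset, Nat.card_Icc, Nat.add_sub_cancel]

lemma lt_mCount_iff {b u : ℝ} {k : ℕ} : k < mCount b u ↔ (k : ℝ) + 1 + b ≤ Real.exp u := by
  rw [mCount_eq_toNat_floor, Int.lt_toNat, ← Int.add_one_le_iff, Int.le_floor]
  push_cast
  constructor <;> intro h <;> linarith

lemma hasSum_geom_mul_indicator_mCount {b : ℝ} (hb : -1 < b) {w : ℂ} (hw : w ≠ 1)
    (f : ℝ → ℂ) (u : ℝ) :
    HasSum (fun k : ℕ ↦ w ^ k * (Ici (Real.log (k + 1 + b))).indicator f u)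
      (f u * ((1 - w ^ mCount b u) / (1 - w))) := by
  have hmem (k : ℕ) : u ∈ Ici (Real.log (k + 1 + b)) ↔ k < mCount b u := by
    rw [mem_Ici, Real.log_le_iff_le_exp (by linarith [k.cast_nonneg (α := ℝ)]), lt_mCount_iff]
  have hgeom : (1 - w ^ mCount b u) / (1 - w) = ∑ k ∈ Finset.range (mCount b u), w ^ k := by
    rw [geom_sum_eq hw, ← neg_sub, ← neg_sub w, neg_div_neg_eq]
  rw [hgeom, Finset.mul_sum]
  convert hasSum_sum_of_ne_finset_zero (L := SummationFilter.unconditional ℕ)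
    (s := Finset.range (mCount b u)) (fun k hk ↦ ?_) using 1
  · refine Finset.sum_congr rfl fun k hk ↦ ?_
    rw [indicator_of_mem ((hmem k).2 (Finset.mem_range.1 hk)), mul_comm]
  · rw [indicator_of_notMem fun h ↦ hk (Finset.mem_range.2 ((hmem k).1 h)), mul_zero]

lemma integral_indicator_Ici_log_cexp_neg_mul {q : ℂ} (hq : 0 < q.re) {s : ℝ} (hs : 1 < s) :
    ∫ u in Ioi 0, (Ici (Real.log s)).indicator (fun u : ℝ ↦ Complex.exp (-(q * u))) u =
      (s : ℂ) ^ (-q) / q := by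
  have hIci : Ici (Real.log s) ∩ Ioi 0 = Ici (Real.log s) :=
    inter_eq_left.2 fun u hu ↦ (Real.log_pos hs).trans_le hu
  simp_rw [← neg_mul]
  rw [integral_indicator measurableSet_Ici, Measure.restrict_restrict measurableSet_Ici, hIci,
    integral_Ici_eq_integral_Ioi, integral_exp_mul_complex_Ioi (by simpa using hq),
    Complex.cpow_def_of_ne_zero (by exact_mod_cast (zero_lt_one.trans hs).ne'),
    ← Complex.ofReal_log (zero_lt_one.trans hs).le, neg_div_neg_eq, mul_comm]

lemma hasSum_integral_cexp_neg_mul_geom_mCount {q : ℂ} (hq : 0 < q.re) {b : ℝ} (hb : 0 < b)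
    {w : ℂ} (hw : ‖w‖ < 1) :
    HasSum (fun k : ℕ ↦ w ^ k * (((k : ℝ) + 1 + b : ℝ) : ℂ) ^ (-q) / q)
      (∫ u in Ioi (0 : ℝ), Complex.exp (-(q * u)) * ((1 - w ^ mCount b u) / (1 - w))) := by
  set f : ℝ → ℂ := fun u ↦ Complex.exp (-(q * u))
  set F : ℕ → ℝ → ℂ := fun k u ↦ w ^ k * (Ici (Real.log (k + 1 + b))).indicator f u
  have hf : IntegrableOn f (Ioi 0) := by
    simpa only [f, ← neg_mul] using integrableOn_exp_mul_complex_Ioi (by simpa using hq) 0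
  have hF_int (k : ℕ) : IntegrableOn (F k) (Ioi 0) :=
    (hf.indicator measurableSet_Ici).const_mul _
  have hF_norm (k : ℕ) : ∫ u in Ioi 0, ‖F k u‖ ≤ ‖w‖ ^ k * ∫ u in Ioi 0, ‖f u‖ := by
    simp only [F, norm_mul, norm_pow, integral_const_mul]
    exact mul_le_mul_of_nonneg_left (integral_mono (hf.indicator measurableSet_Ici).norm hf.norm
      fun u ↦ norm_indicator_le_norm_self f u) (by positivity)
  have hF_sum : Summable fun k ↦ ∫ u in Ioi 0, ‖F k u‖ :=
    .of_nonneg_of_le (fun _ ↦ integral_nonneg fun _ ↦ norm_nonneg _) hF_norm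
      ((summable_geometric_of_lt_one (norm_nonneg w) hw).mul_right _)
  have hw1 : w ≠ 1 := by rintro rfl; simp at hw
  have hterm (k : ℕ) : ∫ u in Ioi 0, F k u = w ^ k * (((k : ℝ) + 1 + b : ℝ) : ℂ) ^ (-q) / q := by
    rw [integral_const_mul, mul_div_assoc,
      integral_indicator_Ici_log_cexp_neg_mul hq (by linarith [k.cast_nonneg (α := ℝ)])]
  have hsum : ∫ u in Ioi (0 : ℝ), Complex.exp (-(q * u)) * ((1 - w ^ mCount b u) / (1 - w)) =
      ∫ u in Ioi 0, ∑' k, F k u :=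
    setIntegral_congr_fun measurableSet_Ioi fun u _ ↦
      ((hasSum_geom_mul_indicator_mCount (by linarith) hw1 f u).tsum_eq).symm
  simpa only [hterm, hsum] using hasSum_integral_of_summable_integral_norm hF_int hF_sum

lemma hasSum_cexp_mul_integral_geom_mCount {q : ℂ} (hq : 0 < q.re) (a : ℝ) {b : ℝ} (hb : 0 < b)
    {z : ℂ} (hz : ‖z‖ < 1) {v : ℝ} (hv : 0 < v) :
    HasSum (fun k : ℕ ↦ z ^ k * (((k : ℝ) + 1 + b : ℝ) : ℂ) ^ (-q) / q *
        Real.exp (-((k : ℝ) + 1 + a) * v))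
      (Complex.exp (-(((a : ℂ) + 1) * v)) * ∫ u in Ioi (0 : ℝ), Complex.exp (-(q * u)) *
        ((1 - (z * Complex.exp (-(v : ℂ))) ^ mCount b u) / (1 - z * Complex.exp (-(v : ℂ))))) := by
  have hw : ‖z * Complex.exp (-(v : ℂ))‖ < 1 := by
    rw [norm_mul, Complex.norm_exp, Complex.neg_re, Complex.ofReal_re]
    exact (mul_le_of_le_one_right (norm_nonneg z) (Real.exp_le_one_iff.2 (by linarith))).trans_lt hz
  have hterm (k : ℕ) : Complex.exp (-(((a : ℂ) + 1) * v)) *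
      ((z * Complex.exp (-(v : ℂ))) ^ k * (((k : ℝ) + 1 + b : ℝ) : ℂ) ^ (-q) / q) =
        z ^ k * (((k : ℝ) + 1 + b : ℝ) : ℂ) ^ (-q) / q * Real.exp (-((k : ℝ) + 1 + a) * v) := by
    rw [Complex.ofReal_exp, mul_pow, ← Complex.exp_nat_mul]
    have hexp : Complex.exp (-(((a : ℂ) + 1) * v)) * Complex.exp (k * -(v : ℂ)) =
        Complex.exp (((-((k : ℝ) + 1 + a) * v : ℝ) : ℂ)) := by
      rw [← Complex.exp_add]
      push_cast
      ring_nf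
    linear_combination z ^ k * (((k : ℝ) + 1 + b : ℝ) : ℂ) ^ (-q) / q * hexp
  simpa only [hterm] using (hasSum_integral_cexp_neg_mul_geom_mCount hq hb hw).mul_left
    (Complex.exp (-(((a : ℂ) + 1) * v)))

lemma norm_ofReal_cpow_neg_le_one {s : ℝ} (hs : 1 ≤ s) {q : ℂ} (hq : 0 ≤ q.re) :
    ‖(s : ℂ) ^ (-q)‖ ≤ 1 := by
  rw [Complex.norm_cpow_eq_rpow_re_of_pos (zero_lt_one.trans_le hs), Complex.neg_re]
  exact Real.rpow_le_one_of_one_le_of_nonpos hs (neg_nonpos.2 hq)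

lemma summable_norm_div_rpow {z : ℂ} (hz : ‖z‖ < 1) {p q : ℂ} (hp : 0 ≤ p.re) (hq : 0 ≤ q.re)
    {a b : ℝ} (ha : 0 ≤ a) (hb : 0 ≤ b) :
    Summable fun k : ℕ ↦
      ‖z ^ k * (((k : ℝ) + 1 + b : ℝ) : ℂ) ^ (-q) / q‖ / ((k : ℝ) + 1 + a) ^ p.re := by
  refine .of_nonneg_of_le (fun _ ↦ by positivity) (fun k ↦ ?_)
    ((summable_geometric_of_lt_one (norm_nonneg z) hz).div_const ‖q‖)
  have hk (c : ℝ) (hc : 0 ≤ c) : 1 ≤ (k : ℝ) + 1 + c := by linarith [k.cast_nonneg (α := ℝ)]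
  refine (div_le_self (norm_nonneg _) (Real.one_le_rpow (hk a ha) hp)).trans ?_
  rw [norm_div, norm_mul, norm_pow]
  gcongr
  exact mul_le_of_le_one_right (by positivity) (norm_ofReal_cpow_neg_le_one (hk b hb) hq)

lemma hasSum_integral_integral_geom_mCount {p q : ℂ} (hp : 0 < p.re) (hq : 0 < q.re)
    {a b : ℝ} (ha : 0 ≤ a) (hb : 0 < b) {z : ℂ} (hz : ‖z‖ < 1) :
    HasSum (fun k : ℕ ↦ Complex.Gamma p * (z ^ k * (((k : ℝ) + 1 + b : ℝ) : ℂ) ^ (-q) / q) /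
        (((k : ℝ) + 1 + a : ℝ) : ℂ) ^ p)
      (∫ v in Ioi (0 : ℝ), ∫ u in Ioi (0 : ℝ),
        Complex.exp (-(q * (u : ℂ))) * Complex.exp (-(((a : ℂ) + 1) * (v : ℂ))) *
          (v : ℂ) ^ (p - 1) *
          ((1 - (z * Complex.exp (-(v : ℂ))) ^ (mCount b u)) /
            (1 - z * Complex.exp (-(v : ℂ))))) := by
  convert hasSum_mellin (fun k ↦ Or.inr (by positivity)) hp
    (fun v hv ↦ hasSum_cexp_mul_integral_geom_mCount hq a hb hz hv)
    (summable_norm_div_rpow hz hp.le hq.le ha hb.le) using 1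
  refine integral_congr_ae (Filter.Eventually.of_forall fun v ↦ ?_)
  simp only [smul_eq_mul, ← integral_const_mul]
  congr 1 with u
  ring

theorem generalized_polylog_double_integral
    (p q : ℂ) (hp : 0 < p.re) (hq : 0 < q.re)
    (a b : ℝ) (ha : 1 < a) (hb : 1 < b) :
    (∀ u : ℝ, 0 ≤ u → mCount b u = (⌊Real.exp u - b⌋).toNat) ∧
    ∀ z : ℂ, ‖z‖ < 1 →
      genPolylog p q a b z =
        ((1 + a : ℝ) : ℂ) ^ p * ((1 + b : ℝ) : ℂ) ^ q *
          ((z * q / Complex.Gamma p) *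
            ∫ v in Set.Ioi (0 : ℝ), ∫ u in Set.Ioi (0 : ℝ),
              Complex.exp (-(q * (u : ℂ))) * Complex.exp (-(((a : ℂ) + 1) * (v : ℂ))) *
                (v : ℂ) ^ (p - 1) *
                ((1 - (z * Complex.exp (-(v : ℂ))) ^ (mCount b u)) /
                  (1 - z * Complex.exp (-(v : ℂ))))) := by
  refine ⟨fun u _ ↦ mCount_eq_toNat_floor b u, fun z hz ↦ ?_⟩
  rw [genPolylog, ← (hasSum_integral_integral_geom_mCount hp hq (by linarith) (by linarith)
    hz).tsum_eq, ← tsum_mul_left, ← tsum_mul_left]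
  refine tsum_congr fun k ↦ ?_
  have hq0 : q ≠ 0 := by rintro rfl; simp at hq
  have hne (c : ℝ) (hc : 0 < c) (s : ℂ) : (((k : ℝ) + 1 + c : ℝ) : ℂ) ^ s ≠ 0 :=
    Complex.cpow_ne_zero_iff.2 (.inl (Complex.ofReal_ne_zero.2 (by positivity)))
  rw [Complex.cpow_neg]
  field_simp [hq0, Complex.Gamma_ne_zero_of_re_pos hp, hne a (by linarith) p,
    hne b (by linarith) q]
  ring
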